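/- If T is a tribracket and X is an entropic tribracket, then Hom(T,X) with the pointwise operation [f,g,h](t) = [f(t),g(t),h(t)]_X is itself an entropic tribracket. -/

import Mathlib

structure Tribracket (X : Type*) where
  br : X → X → X → X
  exu_left : ∀ x y z, ∃! a, br a x y = z
  exu_mid : ∀ x y z, ∃! b, br x b y = z
  exu_right : ∀ x y z, ∃! c, br x y c = z
  tri1 : ∀ x y z w, br y (br x y z) (br x y w) = br z (br x y z) (br x z w)
  tri2 : ∀ x y z w, br z (br x y z) (br x z w) = br w (br x y w) (br x z w)

def Tribracket.IsEntropic {X : Type*} (T : Tribracket X) : Prop :=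
  ∀ x y z u v w a b c,
    T.br (T.br x y z) (T.br u v w) (T.br a b c) =
    T.br (T.br x u a) (T.br y v b) (T.br z w c)

def IsTriHom {X Y : Type*} (TX : Tribracket X) (TY : Tribracket Y) (f : X → Y) : Prop :=
  ∀ x y z, f (TX.br x y z) = TY.br (f x) (f y) (f z)

/-! Each of the three ternary operations obtained from an entropic bracket by moving one
argument to the front commutes with the bracket itself. Pointwise, such an operation maps
homomorphisms to homomorphisms, and the unique pointwise solution of an equation in it is
again a homomorphism, because it solves the same equation after applying the bracket. -/

/-- `σ` is a homomorphism `X × X × X → X` for the componentwise bracket. -/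
def Tribracket.CommutesWith {X : Type*} (TX : Tribracket X) (σ : X → X → X → X) : Prop :=
  ∀ x y z u v w a b c,
    σ (TX.br x y z) (TX.br u v w) (TX.br a b c) = TX.br (σ x u a) (σ y v b) (σ z w c)

abbrev TriHom {T X : Type*} (TT : Tribracket T) (TX : Tribracket X) : Type _ :=
  {f : T → X // IsTriHom TT TX f}

namespace Tribracket

variable {T X : Type*} {TT : Tribracket T} {TX : Tribracket X}

theorem IsEntropic.commutesWith_br (hX : TX.IsEntropic) : TX.CommutesWith TX.br := hX

theorem IsEntropic.commutesWith_br_mid (hX : TX.IsEntropic) :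
    TX.CommutesWith fun b x y => TX.br x b y :=
  fun _ _ _ _ _ _ _ _ _ => hX _ _ _ _ _ _ _ _ _

theorem IsEntropic.commutesWith_br_right (hX : TX.IsEntropic) :
    TX.CommutesWith fun c x y => TX.br x y c :=
  fun _ _ _ _ _ _ _ _ _ => hX _ _ _ _ _ _ _ _ _

theorem CommutesWith.isTriHom {σ : X → X → X → X} (hσ : TX.CommutesWith σ)
    {f g h : T → X} (hf : IsTriHom TT TX f) (hg : IsTriHom TT TX g) (hh : IsTriHom TT TX h) :
    IsTriHom TT TX fun t => σ (f t) (g t) (h t) := by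
  intro p q r
  simp only [hf p q r, hg p q r, hh p q r]
  exact hσ _ _ _ _ _ _ _ _ _

theorem CommutesWith.existsUnique_triHom {σ : X → X → X → X} (hσ : TX.CommutesWith σ)
    (hσu : ∀ x y z, ∃! a, σ a x y = z) (x y z : TriHom TT TX) :
    ∃! a : TriHom TT TX, ∀ t, σ (a.1 t) (x.1 t) (y.1 t) = z.1 t := by
  choose a ha hau using fun t => hσu (x.1 t) (y.1 t) (z.1 t)
  beta_reduce at ha hau
  have hhom : IsTriHom TT TX a := by
    intro p q r
    refine (hau (TT.br p q r) _ ?_).symm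
    rw [x.2, y.2, z.2, hσ, ha, ha, ha]
  exact ⟨⟨a, hhom⟩, ha, fun b hb => Subtype.ext (funext fun t => hau t _ (hb t))⟩

def pointwiseBr (hX : TX.IsEntropic) (f g h : TriHom TT TX) : TriHom TT TX :=
  ⟨fun t => TX.br (f.1 t) (g.1 t) (h.1 t), hX.commutesWith_br.isTriHom f.2 g.2 h.2⟩

theorem pointwiseBr_eq_iff (hX : TX.IsEntropic) {f g h k : TriHom TT TX} :
    pointwiseBr hX f g h = k ↔ ∀ t, TX.br (f.1 t) (g.1 t) (h.1 t) = k.1 t :=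
  Subtype.ext_iff.trans funext_iff

def homTribracket (TT : Tribracket T) (hX : TX.IsEntropic) : Tribracket (TriHom TT TX) where
  br := pointwiseBr hX
  exu_left x y z := (existsUnique_congr fun _ => pointwiseBr_eq_iff hX).mpr
    (hX.commutesWith_br.existsUnique_triHom TX.exu_left x y z)
  exu_mid x y z := (existsUnique_congr fun _ => pointwiseBr_eq_iff hX).mpr
    (hX.commutesWith_br_mid.existsUnique_triHom TX.exu_mid x y z)
  exu_right x y z := (existsUnique_congr fun _ => pointwiseBr_eq_iff hX).mpr
    (hX.commutesWith_br_right.existsUnique_triHom TX.exu_right x y z)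
  tri1 _ _ _ _ := Subtype.ext (funext fun _ => TX.tri1 _ _ _ _)
  tri2 _ _ _ _ := Subtype.ext (funext fun _ => TX.tri2 _ _ _ _)

theorem homTribracket_isEntropic (hX : TX.IsEntropic) : (homTribracket TT hX).IsEntropic :=
  fun _ _ _ _ _ _ _ _ _ => Subtype.ext (funext fun _ => hX _ _ _ _ _ _ _ _ _)

end Tribracket

theorem homset_entropic_tribracket {T X : Type*} (TT : Tribracket T) (TX : Tribracket X)
    (hX : TX.IsEntropic) :
    ∃ H : Tribracket {f : T → X // IsTriHom TT TX f},
      (∀ f g h : {f : T → X // IsTriHom TT TX f},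
        (H.br f g h).1 = fun t => TX.br (f.1 t) (g.1 t) (h.1 t)) ∧ H.IsEntropic :=
  ⟨Tribracket.homTribracket TT hX, fun _ _ _ => rfl, Tribracket.homTribracket_isEntropic hX⟩
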